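/- arXiv:math/0609342 — 6 statements merged into one kernel-verified Lean document; each statement's English description precedes it below -/
import Mathlib

section
/- Let (A(t))_{t∈ℕ} be a sequence of n×n nonnegative real matrices, each having a positive diagonal (all diagonal entries strictly positive). Then there exists a strictly increasing sequence of natural numbers 0 < t_0 < t_1 < t_2 < ... such that for every i ∈ ℕ the backward accumulation A(t_{i+1}, t_i) has the same zero pattern as A(t_1, t_0); that is, for all indices a, b one has (A(t_{i+1}, t_i))_{ab} > 0 if and only if (A(t_1, t_0))_{ab} > 0. -/
/-!
For fixed `s`, the zero pattern of `A(t, s)` can only grow with `t`, because the new factors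
have positive diagonals; so it stabilizes at some limit pattern `L s`. Likewise the pattern of
`A(t, s)` can only shrink as `s` grows, so `L` is antitone and is constant from some `s₀` on.
Starting at `t₀ = s₀ + 1` and choosing each `t_{i+1}` past the stabilization time of `t_i`
makes every `A(t_{i+1}, t_i)` carry the pattern `L s₀`.
-/

open Matrix

/-- Backward accumulation `A(t,s) = A(t-1) * A(t-2) * ⋯ * A(s)`
(with `backAcc A s s` the identity matrix). -/
def backAcc {n : ℕ} (A : ℕ → Matrix (Fin n) (Fin n) ℝ) (s t : ℕ) :
    Matrix (Fin n) (Fin n) ℝ :=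
  ((List.range' s (t - s)).reverse.map A).prod

namespace Matrix

variable {ι R : Type*} [Fintype ι] [Semiring R] [PartialOrder R] [IsStrictOrderedRing R]

lemma mul_apply_pos {M N : Matrix ι ι R} (hM : ∀ i j, 0 ≤ M i j) (hN : ∀ i j, 0 ≤ N i j)
    {a b c : ι} (hac : 0 < M a c) (hcb : 0 < N c b) : 0 < (M * N) a b :=
  Finset.sum_pos' (fun k _ => mul_nonneg (hM a k) (hN k b))
    ⟨c, Finset.mem_univ c, mul_pos hac hcb⟩

variable (ι R) in
def nonnegPosDiag [DecidableEq ι] : Submonoid (Matrix ι ι R) where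
  carrier := {M | (∀ i j, 0 ≤ M i j) ∧ ∀ i, 0 < M i i}
  one_mem' := ⟨fun i j => by by_cases h : i = j <;> simp [one_apply, h], fun i => by simp⟩
  mul_mem' := fun {M N} hM hN =>
    ⟨fun i j => Finset.sum_nonneg fun k _ => mul_nonneg (hM.1 i k) (hN.1 k j),
      fun i => mul_apply_pos hM.1 hN.1 (hM.2 i) (hN.2 i)⟩

variable [DecidableEq ι] {M N : Matrix ι ι R} {a b : ι}

lemma mul_apply_pos_of_mem_nonnegPosDiag_left (hM : M ∈ nonnegPosDiag ι R)
    (hN : ∀ i j, 0 ≤ N i j) (h : 0 < N a b) : 0 < (M * N) a b :=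
  mul_apply_pos hM.1 hN (hM.2 a) h

lemma mul_apply_pos_of_mem_nonnegPosDiag_right (hM : M ∈ nonnegPosDiag ι R)
    (hN : ∀ i j, 0 ≤ N i j) (h : 0 < N a b) : 0 < (N * M) a b :=
  mul_apply_pos hN hM.1 h (hM.2 b)

end Matrix

section backAcc

variable {n : ℕ} {A : ℕ → Matrix (Fin n) (Fin n) ℝ}

lemma backAcc_mul {s m t : ℕ} (hsm : s ≤ m) (hmt : m ≤ t) :
    backAcc A m t * backAcc A s m = backAcc A s t := by
  have hsplit := @List.range'_append_1 s (m - s) (t - m)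
  rw [Nat.add_sub_cancel' hsm, add_comm (m - s), Nat.sub_add_sub_cancel hmt hsm] at hsplit
  simp [backAcc, ← hsplit]

lemma backAcc_mem_nonnegPosDiag (hA : ∀ t, A t ∈ nonnegPosDiag (Fin n) ℝ) (s t : ℕ) :
    backAcc A s t ∈ nonnegPosDiag (Fin n) ℝ :=
  Submonoid.list_prod_mem _ (by simpa using fun _ k _ _ hk => hk ▸ hA k)

variable {a b : Fin n}

lemma backAcc_apply_pos_of_le_right (hA : ∀ t, A t ∈ nonnegPosDiag (Fin n) ℝ) {s t t' : ℕ}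
    (hst : s ≤ t) (htt' : t ≤ t') (h : 0 < backAcc A s t a b) : 0 < backAcc A s t' a b := by
  rw [← backAcc_mul hst htt']
  exact mul_apply_pos_of_mem_nonnegPosDiag_left (backAcc_mem_nonnegPosDiag hA t t')
    (backAcc_mem_nonnegPosDiag hA s t).1 h

lemma backAcc_apply_pos_of_le_left (hA : ∀ t, A t ∈ nonnegPosDiag (Fin n) ℝ) {s s' t : ℕ}
    (hss' : s ≤ s') (hs't : s' ≤ t) (h : 0 < backAcc A s' t a b) : 0 < backAcc A s t a b := by
  rw [← backAcc_mul hss' hs't]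
  exact mul_apply_pos_of_mem_nonnegPosDiag_right (backAcc_mem_nonnegPosDiag hA s s')
    (backAcc_mem_nonnegPosDiag hA s' t).1 h

end backAcc

section Stabilization

variable {α : Type*} [PartialOrder α]

lemma exists_lt_forall_eq_of_monotoneOn [WellFoundedGT α] {f : ℕ → α} (s : ℕ)
    (hf : MonotoneOn f (Set.Ici s)) : ∃ T, s < T ∧ ∀ u, T ≤ u → f u = f T := by
  obtain ⟨N, hN⟩ := WellFoundedGT.monotone_chain_condition
    ⟨fun k => f (s + 1 + k), fun k l hkl => hf (by simp; omega) (by simp; omega) (by omega)⟩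
  refine ⟨s + 1 + N, by omega, fun u hu => ?_⟩
  obtain ⟨k, rfl⟩ := Nat.exists_eq_add_of_le hu
  simpa [add_assoc] using (hN (N + k) (by omega)).symm

lemma exists_strictMono_forall_eq_of_monotone_right_antitone_left [WellFoundedLT α]
    [WellFoundedGT α] (P : ℕ → ℕ → α)
    (hright : ∀ s t t', s ≤ t → t ≤ t' → P s t ≤ P s t')
    (hleft : ∀ s s' t, s ≤ s' → s' ≤ t → P s' t ≤ P s t) :
    ∃ τ : ℕ → ℕ, 0 < τ 0 ∧ StrictMono τ ∧ ∀ i, P (τ i) (τ (i + 1)) = P (τ 0) (τ 1) := by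
  choose T hsT hT using fun s => exists_lt_forall_eq_of_monotoneOn (f := P s) s
    fun t ht t' _ htt' => hright s t t' ht htt'
  have hlim : Antitone fun s => P s (T s) := by
    intro s s' hss'
    have := hleft s s' (max (T s) (T s')) hss' ((hsT s').le.trans (le_max_right _ _))
    rwa [hT s _ (le_max_left _ _), hT s' _ (le_max_right _ _)] at this
  obtain ⟨s₀, hs₀⟩ := WellFoundedLT.antitone_chain_condition hlim
  set τ : ℕ → ℕ := fun i => T^[i] (s₀ + 1)
  have hτ_succ (i : ℕ) : τ (i + 1) = T (τ i) := Function.iterate_succ_apply' T i _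
  have hτ : StrictMono τ := strictMono_nat_of_lt_succ fun i => hτ_succ i ▸ hsT (τ i)
  have hτ_lim (i : ℕ) : P (τ i) (τ (i + 1)) = P s₀ (T s₀) := by
    rw [hτ_succ]
    exact (hs₀ (τ i) (Nat.le_of_succ_le (hτ.monotone (Nat.zero_le i)))).symm
  exact ⟨τ, Nat.succ_pos s₀, hτ, fun i => (hτ_lim i).trans (hτ_lim 0).symm⟩

end Stabilization

/-- For a sequence of nonnegative matrices with positive diagonals there is a
strictly increasing sequence of times `0 < t 0 < t 1 < ⋯` such that all the
backward accumulations `A(t (i+1), t i)` have the same zero pattern. -/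
theorem statement0 {n : ℕ} (A : ℕ → Matrix (Fin n) (Fin n) ℝ)
    (hnonneg : ∀ t i j, 0 ≤ A t i j)
    (hdiag : ∀ t i, 0 < A t i i) :
    ∃ t : ℕ → ℕ, 0 < t 0 ∧ StrictMono t ∧
      ∀ i : ℕ, ∀ a b : Fin n,
        0 < backAcc A (t i) (t (i + 1)) a b ↔ 0 < backAcc A (t 0) (t 1) a b := by
  have hA (t : ℕ) : A t ∈ nonnegPosDiag (Fin n) ℝ := ⟨hnonneg t, hdiag t⟩
  obtain ⟨τ, hτ0, hτ, hpattern⟩ := exists_strictMono_forall_eq_of_monotone_right_antitone_left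
    (fun s t => {p : Fin n × Fin n | 0 < backAcc A s t p.1 p.2})
    (fun _ _ _ hst htt' _ => backAcc_apply_pos_of_le_right hA hst htt')
    (fun _ _ _ hss' hs't _ => backAcc_apply_pos_of_le_left hA hss' hs't)
  exact ⟨τ, hτ0, hτ, fun i a b => Set.ext_iff.mp (hpattern i) (a, b)⟩
end

section
/- Let (A(t))_{t∈ℕ} be a sequence of n×n nonnegative real matrices, each having a positive diagonal. Then there exists a strictly increasing sequence of natural numbers 0 < t_0 < t_1 < t_2 < ... such that (1) for every i ∈ ℕ the backward accumulation A(t_{i+1}, t_i) has the same zero pattern as A(t_1, t_0), and (2) the relation on indices defined by a → b :⇔ (A(t_1,t_0))_{ab} > 0 is reflexive and transitive (equivalently, every Gantmacher block of the common pattern is either entirely positive or entirely zero). -/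
/-!
Write `A(t, s)` for `backAcc A s t`. For `r ≤ s ≤ t` we have `A(t, r) = A(t, s) A(s, r)`, and all
factors are nonnegative with positive diagonal, so the positivity pattern of `A(t, s)` grows with
`t` and shrinks with `s`. Patterns form a finite lattice, hence for each `s` the pattern of
`A(t, s)` stabilises, as `t → ∞`, to an eventual pattern `F(s)`, and the antitone sequence `F`
stabilises in turn to `F(S)`. Choosing `t₀ > S` and each `t_{i+1}` beyond the stabilisation time
of `t_i` gives every `A(t_{i+1}, t_i)` the pattern `F(S)`. Transitivity holds because the pattern of
`A(t₂, t₀) = A(t₂, t₁) A(t₁, t₀)` contains the composite relation and lies inside `F(t₀) = F(S)`.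
-/

open Matrix

namespace Matrix

def posPattern {ι R : Type*} [Zero R] [LT R] (M : Matrix ι ι R) : Set (ι × ι) :=
  {p | 0 < M p.1 p.2}

variable {ι R : Type*} [Fintype ι] [Semiring R] [PartialOrder R] [IsStrictOrderedRing R]

variable (ι R) in
def nonnegPosDiagSubmonoid [DecidableEq ι] : Submonoid (Matrix ι ι R) where
  carrier := {M | (∀ i j, 0 ≤ M i j) ∧ ∀ i, 0 < M i i}
  one_mem' := ⟨fun i j => by by_cases h : i = j <;> simp [one_apply, h], fun i => by simp⟩
  mul_mem' {M N} hM hN :=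
    ⟨fun i k => Finset.sum_nonneg fun j _ => mul_nonneg (hM.1 i j) (hN.1 j k),
      fun i => Finset.sum_pos' (fun j _ => mul_nonneg (hM.1 i j) (hN.1 j i))
        ⟨i, Finset.mem_univ i, mul_pos (hM.2 i) (hN.2 i)⟩⟩

theorem mk_mem_posPattern_mul {M N : Matrix ι ι R} (hM : ∀ i j, 0 ≤ M i j)
    (hN : ∀ i j, 0 ≤ N i j) {a b c : ι} (hab : (a, b) ∈ M.posPattern)
    (hbc : (b, c) ∈ N.posPattern) : (a, c) ∈ (M * N).posPattern :=
  Finset.sum_pos' (fun j _ => mul_nonneg (hM a j) (hN j c)) ⟨b, Finset.mem_univ b, mul_pos hab hbc⟩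

variable [DecidableEq ι] {M N : Matrix ι ι R}

theorem posPattern_subset_mul_left (hM : M ∈ nonnegPosDiagSubmonoid ι R)
    (hN : N ∈ nonnegPosDiagSubmonoid ι R) : N.posPattern ⊆ (M * N).posPattern :=
  fun p hp => mk_mem_posPattern_mul hM.1 hN.1 (b := p.1) (hM.2 p.1) hp

theorem posPattern_subset_mul_right (hM : M ∈ nonnegPosDiagSubmonoid ι R)
    (hN : N ∈ nonnegPosDiagSubmonoid ι R) : M.posPattern ⊆ (M * N).posPattern :=
  fun p hp => mk_mem_posPattern_mul hM.1 hN.1 (b := p.2) hp (hN.2 p.2)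

theorem posPattern_one_subset (hM : M ∈ nonnegPosDiagSubmonoid ι R) :
    (1 : Matrix ι ι R).posPattern ⊆ M.posPattern := by
  simpa using posPattern_subset_mul_left hM (one_mem _)

end Matrix

theorem exists_forall_ge_eq_iSup {α : Type*} [CompleteLattice α] [WellFoundedGT α]
    {f : ℕ → α} (hf : Monotone f) : ∃ T, ∀ t, T ≤ t → f t = ⨆ i, f i := by
  obtain ⟨T, hT⟩ : ∃ T, ∀ t, T ≤ t → f T = f t :=
    WellFoundedGT.monotone_chain_condition ⟨f, hf⟩
  refine ⟨T, fun t ht => le_antisymm (le_iSup f t) (iSup_le fun i => ?_)⟩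
  calc f i ≤ f (max i t) := hf (le_max_left i t)
    _ = f t := by rw [← hT _ (ht.trans (le_max_right i t)), hT t ht]

theorem exists_strictMono_forall_le_succ (a : ℕ) (T : ℕ → ℕ) :
    ∃ τ : ℕ → ℕ, τ 0 = a ∧ StrictMono τ ∧ ∀ i, T (τ i) ≤ τ (i + 1) := by
  let τ : ℕ → ℕ := fun i => Nat.rec a (fun _ τi => max (T τi) (τi + 1)) i
  exact ⟨τ, rfl, strictMono_nat_of_lt_succ fun i => by simp [τ], fun i => by simp [τ]⟩

section backAcc

variable {n : ℕ} {A : ℕ → Matrix (Fin n) (Fin n) ℝ}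

theorem backAcc_of_le {s t : ℕ} (h : t ≤ s) : backAcc A s t = 1 := by
  simp [backAcc, Nat.sub_eq_zero_of_le h]

theorem backAcc_mul_s1 (A : ℕ → Matrix (Fin n) (Fin n) ℝ) {r s t : ℕ} (hrs : r ≤ s) (hst : s ≤ t) :
    backAcc A s t * backAcc A r s = backAcc A r t := by
  unfold backAcc
  rw [← List.prod_append, ← List.map_append, ← List.reverse_append,
    show t - r = (s - r) + (t - s) by omega, ← List.range'_append_1, Nat.add_sub_of_le hrs]

theorem backAcc_mem {S : Submonoid (Matrix (Fin n) (Fin n) ℝ)} (hA : ∀ t, A t ∈ S) (s t : ℕ) :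
    backAcc A s t ∈ S :=
  Submonoid.list_prod_mem _ fun _ hM => by
    obtain ⟨t, -, rfl⟩ := List.mem_map.mp hM
    exact hA t

variable (hA : ∀ t, A t ∈ nonnegPosDiagSubmonoid (Fin n) ℝ)
include hA

theorem monotone_posPattern_backAcc (s : ℕ) :
    Monotone fun t => (backAcc A s t).posPattern := by
  intro t t' htt'
  dsimp only
  rcases le_total s t with hst | hts
  · rw [← backAcc_mul_s1 A hst htt']
    exact posPattern_subset_mul_left (backAcc_mem hA _ _) (backAcc_mem hA _ _)
  · rw [backAcc_of_le hts]
    exact posPattern_one_subset (backAcc_mem hA _ _)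

theorem antitone_posPattern_backAcc (t : ℕ) :
    Antitone fun s => (backAcc A s t).posPattern := by
  intro s' s hs's
  dsimp only
  rcases le_total s t with hst | hts
  · rw [← backAcc_mul_s1 A hs's hst]
    exact posPattern_subset_mul_right (backAcc_mem hA _ _) (backAcc_mem hA _ _)
  · rw [backAcc_of_le hts]
    exact posPattern_one_subset (backAcc_mem hA _ _)

end backAcc

def eventualPattern {n : ℕ} (A : ℕ → Matrix (Fin n) (Fin n) ℝ) (s : ℕ) : Set (Fin n × Fin n) :=
  ⨆ t, (backAcc A s t).posPattern

section eventualPattern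

variable {n : ℕ} {A : ℕ → Matrix (Fin n) (Fin n) ℝ}

theorem posPattern_backAcc_subset_eventualPattern (s t : ℕ) :
    (backAcc A s t).posPattern ⊆ eventualPattern A s :=
  le_iSup (fun t => (backAcc A s t).posPattern) t

variable (hA : ∀ t, A t ∈ nonnegPosDiagSubmonoid (Fin n) ℝ)
include hA

theorem exists_forall_ge_posPattern_backAcc_eq_eventualPattern (s : ℕ) :
    ∃ T, ∀ t, T ≤ t → (backAcc A s t).posPattern = eventualPattern A s :=
  exists_forall_ge_eq_iSup (monotone_posPattern_backAcc hA s)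

theorem antitone_eventualPattern : Antitone (eventualPattern A) :=
  fun _ _ hs's => iSup_mono fun t => antitone_posPattern_backAcc hA t hs's

theorem mk_mem_eventualPattern_of_backAcc {r s t : ℕ} (hrs : r ≤ s) (hst : s ≤ t) {a b c : Fin n}
    (hab : (a, b) ∈ (backAcc A s t).posPattern) (hbc : (b, c) ∈ (backAcc A r s).posPattern) :
    (a, c) ∈ eventualPattern A r := by
  apply posPattern_backAcc_subset_eventualPattern r t
  rw [← backAcc_mul_s1 A hrs hst]
  exact mk_mem_posPattern_mul (backAcc_mem hA s t).1 (backAcc_mem hA r s).1 hab hbc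

end eventualPattern

/-- For a sequence of nonnegative matrices with positive diagonals there is a
strictly increasing sequence of times `0 < t 0 < t 1 < ⋯` such that all the
backward accumulations `A(t (i+1), t i)` have the same zero pattern, and the
relation `a → b :⇔ (A(t 1, t 0))_{a b} > 0` is reflexive and transitive
(equivalently, every Gantmacher block of the common pattern is either entirely
positive or entirely zero). -/
theorem statement1 {n : ℕ} (A : ℕ → Matrix (Fin n) (Fin n) ℝ)
    (hnonneg : ∀ t i j, 0 ≤ A t i j)
    (hdiag : ∀ t i, 0 < A t i i) :
    ∃ t : ℕ → ℕ, 0 < t 0 ∧ StrictMono t ∧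
      (∀ i : ℕ, ∀ a b : Fin n,
        0 < backAcc A (t i) (t (i + 1)) a b ↔ 0 < backAcc A (t 0) (t 1) a b) ∧
      (∀ a : Fin n, 0 < backAcc A (t 0) (t 1) a a) ∧
      (∀ a b c : Fin n, 0 < backAcc A (t 0) (t 1) a b →
        0 < backAcc A (t 0) (t 1) b c → 0 < backAcc A (t 0) (t 1) a c) := by
  have hA : ∀ t, A t ∈ nonnegPosDiagSubmonoid (Fin n) ℝ := fun t => ⟨hnonneg t, hdiag t⟩
  choose T hT using exists_forall_ge_posPattern_backAcc_eq_eventualPattern hA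
  obtain ⟨S, hS⟩ := WellFoundedLT.antitone_chain_condition (antitone_eventualPattern hA)
  obtain ⟨τ, hτ0, hτ, hτT⟩ := exists_strictMono_forall_le_succ (S + 1) T
  have hSτ : ∀ i, S ≤ τ i := fun i => by have := hτ.monotone (Nat.zero_le i); omega
  have hpattern : ∀ i, (backAcc A (τ i) (τ (i + 1))).posPattern = eventualPattern A S := by
    intro i
    rw [hT _ _ (hτT i), ← hS _ (hSτ i)]
  have hsame : ∀ i,
      (backAcc A (τ i) (τ (i + 1))).posPattern = (backAcc A (τ 0) (τ 1)).posPattern :=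
    fun i => (hpattern i).trans (hpattern 0).symm
  refine ⟨τ, by omega, hτ, fun i a b => Set.ext_iff.mp (hsame i) (a, b),
    fun a => (backAcc_mem hA _ _).2 a, fun a b c hab hbc => ?_⟩
  have hab' : (a, b) ∈ (backAcc A (τ 1) (τ 2)).posPattern := (hsame 1).symm ▸ hab
  have hac := mk_mem_eventualPattern_of_backAcc hA (hτ.monotone (Nat.zero_le 1))
    (hτ.monotone (Nat.le_succ 1)) hab' hbc
  rwa [← hS _ (hSτ 0), ← hpattern 0] at hac
end

section
/- Let A_0, A_1, ..., A_i be n×n row-stochastic real matrices, each having at least one positive entry. Then min⁺(A_i ··· A_1 A_0) ≥ min⁺(A_i) ··· min⁺(A_1) · min⁺(A_0); that is, the smallest positive entry of the product is at least the product of the smallest positive entries of the factors. -/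
open Matrix

/-- A matrix is row-stochastic if all entries are nonnegative and every row
sums to `1`. -/
def RowStochastic {n : ℕ} (A : Matrix (Fin n) (Fin n) ℝ) : Prop :=
  (∀ i j, 0 ≤ A i j) ∧ ∀ i, ∑ j, A i j = 1

/-- `minPos A` is the smallest positive entry of `A`. -/
noncomputable def minPos {n : ℕ} (A : Matrix (Fin n) (Fin n) ℝ) : ℝ :=
  sInf {x : ℝ | 0 < x ∧ ∃ i j, A i j = x}

lemma finite_posSet {n : ℕ} (A : Matrix (Fin n) (Fin n) ℝ) :
    {x : ℝ | 0 < x ∧ ∃ i j, A i j = x}.Finite := by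
  apply Set.Finite.subset (Set.finite_range (fun p : Fin n × Fin n => A p.1 p.2))
  rintro x ⟨-, i, j, rfl⟩; exact ⟨(i, j), rfl⟩

lemma minPos_mem {n : ℕ} {A : Matrix (Fin n) (Fin n) ℝ} (h : ∃ p q, 0 < A p q) :
    0 < minPos A ∧ ∃ i j, A i j = minPos A := by
  obtain ⟨p, q, hpq⟩ := h
  have hmem : A p q ∈ {x : ℝ | 0 < x ∧ ∃ i j, A i j = x} := ⟨hpq, p, q, rfl⟩
  exact Set.Nonempty.csInf_mem ⟨A p q, hmem⟩ (finite_posSet A)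

lemma minPos_le {n : ℕ} {A : Matrix (Fin n) (Fin n) ℝ} {i j : Fin n} (h : 0 < A i j) :
    minPos A ≤ A i j :=
  csInf_le (finite_posSet A).bddBelow ⟨h, i, j, rfl⟩

lemma RowStochastic.mul {n : ℕ} {B C : Matrix (Fin n) (Fin n) ℝ}
    (hB : RowStochastic B) (hC : RowStochastic C) : RowStochastic (B * C) := by
  constructor
  · intro i j
    rw [Matrix.mul_apply]
    exact Finset.sum_nonneg fun k _ => mul_nonneg (hB.1 i k) (hC.1 k j)
  · intro i
    simp only [Matrix.mul_apply]
    rw [Finset.sum_comm]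
    simp only [← Finset.mul_sum, hC.2, mul_one]
    exact hB.2 i

lemma minPos_mul {n : ℕ} {B C : Matrix (Fin n) (Fin n) ℝ}
    (hB : RowStochastic B) (hC : RowStochastic C) (hn : Nonempty (Fin n)) :
    minPos B * minPos C ≤ minPos (B * C) := by
  have hBC := hB.mul hC
  obtain ⟨p⟩ := hn
  have hrow : ∑ j, (B * C) p j = 1 := hBC.2 p
  have hex : ∃ q, 0 < (B * C) p q := by
    by_contra h
    push_neg at h
    have : ∑ j, (B * C) p j ≤ 0 := Finset.sum_nonpos fun j _ => h j
    linarith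
  obtain ⟨q, hq⟩ := hex
  obtain ⟨hM, r, s, hrs⟩ := minPos_mem ⟨p, q, hq⟩
  rw [← hrs]
  have hrs' : 0 < (B * C) r s := hrs ▸ hM
  rw [Matrix.mul_apply] at hrs' ⊢
  have h0 : ∑ _k : Fin n, (0 : ℝ) < ∑ k, B r k * C k s := by simpa using hrs'
  obtain ⟨k, -, hk⟩ := Finset.exists_lt_of_sum_lt h0
  have hBk : 0 < B r k := by
    rcases (hB.1 r k).lt_or_eq with h | h
    · exact h
    · rw [← h, zero_mul] at hk; exact absurd hk (lt_irrefl 0)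
  have hCk : 0 < C k s := by
    rcases (hC.1 k s).lt_or_eq with h | h
    · exact h
    · rw [← h, mul_zero] at hk; exact absurd hk (lt_irrefl 0)
  have hposB := minPos_mem ⟨r, k, hBk⟩
  have hposC := minPos_mem ⟨k, s, hCk⟩
  calc minPos B * minPos C ≤ B r k * C k s :=
        mul_le_mul (minPos_le hBk) (minPos_le hCk) hposC.1.le hBk.le
    _ ≤ ∑ k, B r k * C k s :=
        Finset.single_le_sum (fun m _ => mul_nonneg (hB.1 r m) (hC.1 m s))
          (Finset.mem_univ k)

lemma prod_stochastic {n : ℕ} (A : ℕ → Matrix (Fin n) (Fin n) ℝ) (i : ℕ)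
    (hstoch : ∀ k ≤ i, RowStochastic (A k)) :
    RowStochastic (((List.range (i + 1)).reverse.map A).prod) := by
  induction i with
  | zero => simpa [List.range_succ] using hstoch 0 le_rfl
  | succ i ih =>
    rw [List.range_succ]
    simp only [List.reverse_append, List.reverse_singleton, List.singleton_append,
      List.map_cons, List.prod_cons]
    exact (hstoch (i + 1) le_rfl).mul (ih fun k hk => hstoch k (hk.trans (Nat.le_succ _)))

/-- The smallest positive entry of a product `A i * ⋯ * A 1 * A 0` of
row-stochastic matrices (each with at least one positive entry) is at least the
product of the smallest positive entries of the factors. -/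
theorem statement7 {n : ℕ} (A : ℕ → Matrix (Fin n) (Fin n) ℝ) (i : ℕ)
    (hstoch : ∀ k ≤ i, RowStochastic (A k))
    (hpos : ∀ k ≤ i, ∃ p q, 0 < A k p q) :
    ∏ k ∈ Finset.range (i + 1), minPos (A k) ≤
      minPos (((List.range (i + 1)).reverse.map A).prod) := by
  have hn : Nonempty (Fin n) := ⟨(hpos 0 (Nat.zero_le _)).choose⟩
  induction i with
  | zero => simp [List.range_succ]
  | succ i ih =>
    rw [List.range_succ, Finset.prod_range_succ]
    simp only [List.reverse_append, List.reverse_singleton, List.singleton_append,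
      List.map_cons, List.prod_cons]
    have hstoch' : ∀ k ≤ i, RowStochastic (A k) :=
      fun k hk => hstoch k (hk.trans (Nat.le_succ _))
    have hpos' : ∀ k ≤ i, ∃ p q, 0 < A k p q :=
      fun k hk => hpos k (hk.trans (Nat.le_succ _))
    have ih' := ih hstoch' hpos'
    have hA1 := minPos_mem (hpos (i + 1) le_rfl)
    have hP := prod_stochastic A i hstoch'
    calc (∏ k ∈ Finset.range (i + 1), minPos (A k)) * minPos (A (i + 1))
        = minPos (A (i + 1)) * ∏ k ∈ Finset.range (i + 1), minPos (A k) := mul_comm _ _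
      _ ≤ minPos (A (i + 1)) * minPos (((List.range (i + 1)).reverse.map A).prod) :=
          mul_le_mul_of_nonneg_left ih' hA1.1.le
      _ ≤ minPos (A (i + 1) * ((List.range (i + 1)).reverse.map A).prod) :=
          minPos_mul (hstoch (i + 1) le_rfl) hP hn
end

section
/- Let A be an n×n row-stochastic real matrix (n ≥ 2), and let P be an (n−1)×n real matrix whose rows form an orthonormal basis of the orthogonal complement of the span of the all-ones vector 𝟏 in ℝ^n (so P𝟏 = 0 and PPᵀ is the (n−1)×(n−1) identity). If λ ∈ ℂ is an eigenvalue of A with λ ≠ 1, then λ is an eigenvalue of the (n−1)×(n−1) matrix PAPᵀ. Moreover, if x is an eigenvector of A for λ, then Px ≠ 0 and Px is an eigenvector of PAPᵀ for λ. -/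
open Matrix

lemma kerP_real {n : ℕ} (hn : 2 ≤ n) (P : Matrix (Fin (n - 1)) (Fin n) ℝ)
    (hP1 : P *ᵥ (fun _ => (1 : ℝ)) = 0)
    (hPP : P * Pᵀ = 1) (v : Fin n → ℝ) (hv : P *ᵥ v = 0) :
    ∃ a : ℝ, v = fun _ => a := by
  have hrank : P.rank = n - 1 := by
    refine le_antisymm (le_trans (Matrix.rank_le_card_height P) (by simp)) ?_
    calc n - 1 = (1 : Matrix (Fin (n-1)) (Fin (n-1)) ℝ).rank := by simp [Matrix.rank_one]
      _ = (P * Pᵀ).rank := by rw [hPP]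
      _ ≤ P.rank := Matrix.rank_mul_le_left P Pᵀ
  have hone : (fun _ => (1:ℝ) : Fin n → ℝ) ≠ 0 := by
    intro h
    have := congrFun h ⟨0, by omega⟩
    simp at this
  have hspan : Submodule.span ℝ {(fun _ => (1:ℝ) : Fin n → ℝ)} ≤ LinearMap.ker P.mulVecLin := by
    rw [Submodule.span_singleton_le_iff_mem]
    simpa [Matrix.mulVecLin] using hP1
  have hrn := LinearMap.finrank_range_add_finrank_ker P.mulVecLin
  have hfr : Module.finrank ℝ (LinearMap.range P.mulVecLin) = n - 1 := hrank
  have hdim : Module.finrank ℝ (Fin n → ℝ) = n := by simp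
  have hker : Module.finrank ℝ (LinearMap.ker P.mulVecLin) = 1 := by
    rw [hfr, hdim] at hrn; omega
  have hsp1 : Module.finrank ℝ (Submodule.span ℝ {(fun _ => (1:ℝ) : Fin n → ℝ)}) = 1 :=
    finrank_span_singleton hone
  have heq : Submodule.span ℝ {(fun _ => (1:ℝ) : Fin n → ℝ)} = LinearMap.ker P.mulVecLin :=
    Submodule.eq_of_le_of_finrank_le hspan (by rw [hker, hsp1])
  have hv' : v ∈ Submodule.span ℝ {(fun _ => (1:ℝ) : Fin n → ℝ)} := by
    rw [heq]; simpa [Matrix.mulVecLin] using hv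
  obtain ⟨a, ha⟩ := Submodule.mem_span_singleton.mp hv'
  exact ⟨a, by rw [← ha]; funext i; simp⟩

lemma kerP_complex {n : ℕ} (hn : 2 ≤ n) (P : Matrix (Fin (n - 1)) (Fin n) ℝ)
    (hP1 : P *ᵥ (fun _ => (1 : ℝ)) = 0)
    (hPP : P * Pᵀ = 1) (x : Fin n → ℂ) (hx : (P.map Complex.ofReal) *ᵥ x = 0) :
    ∃ c : ℂ, x = fun _ => c := by
  have hre : P *ᵥ (fun j => (x j).re) = 0 := by
    funext i
    have := congrFun hx i
    have h2 := congrArg Complex.re this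
    simpa [Matrix.mulVec, Matrix.map_apply, dotProduct, Complex.mul_re] using h2
  have him : P *ᵥ (fun j => (x j).im) = 0 := by
    funext i
    have := congrFun hx i
    have h2 := congrArg Complex.im this
    simpa [Matrix.mulVec, Matrix.map_apply, dotProduct, Complex.mul_im] using h2
  obtain ⟨a, ha⟩ := kerP_real hn P hP1 hPP _ hre
  obtain ⟨b, hb⟩ := kerP_real hn P hP1 hPP _ him
  refine ⟨Complex.mk a b, ?_⟩
  funext i
  have h1 : (x i).re = a := congrFun ha i
  have h2 : (x i).im = b := congrFun hb i
  exact Complex.ext h1 h2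

/-- If the rows of the `(n-1) × n` matrix `P` form an orthonormal basis of the
orthogonal complement of `span{𝟏}` (so `P 𝟏 = 0` and `P Pᵀ = 1`), then every
complex eigenvalue `λ ≠ 1` of a row-stochastic matrix `A` is an eigenvalue of
`P A Pᵀ`; moreover, if `x` is an eigenvector of `A` for `λ`, then `P x ≠ 0` and
`P x` is an eigenvector of `P A Pᵀ` for `λ`. -/
theorem statement12 {n : ℕ} (hn : 2 ≤ n) (A : Matrix (Fin n) (Fin n) ℝ)
    (hA : RowStochastic A)
    (P : Matrix (Fin (n - 1)) (Fin n) ℝ)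
    (hP1 : P *ᵥ (fun _ => (1 : ℝ)) = 0)
    (hPP : P * Pᵀ = 1)
    (lam : ℂ) (hlam : lam ≠ 1)
    (heig : ∃ x : Fin n → ℂ, x ≠ 0 ∧ (A.map Complex.ofReal) *ᵥ x = lam • x) :
    (∃ y : Fin (n - 1) → ℂ, y ≠ 0 ∧
      ((P.map Complex.ofReal) * (A.map Complex.ofReal) * (Pᵀ.map Complex.ofReal)) *ᵥ y
        = lam • y) ∧
    ∀ x : Fin n → ℂ, x ≠ 0 → (A.map Complex.ofReal) *ᵥ x = lam • x →
      (P.map Complex.ofReal) *ᵥ x ≠ 0 ∧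
      ((P.map Complex.ofReal) * (A.map Complex.ofReal) * (Pᵀ.map Complex.ofReal)) *ᵥ
          ((P.map Complex.ofReal) *ᵥ x)
        = lam • ((P.map Complex.ofReal) *ᵥ x) := by
  set Ac := A.map Complex.ofReal with hAc
  set Pc := P.map Complex.ofReal with hPc
  set Ptc := Pᵀ.map Complex.ofReal with hPtc
  -- A applied to the all-ones vector gives the all-ones vector (over ℂ)
  have hAone : Ac *ᵥ (fun _ => (1 : ℂ)) = fun _ => (1 : ℂ) := by
    funext i
    have := hA.2 i
    simp only [hAc, Matrix.mulVec, dotProduct, Matrix.map_apply, mul_one]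
    rw [← Complex.ofReal_sum]
    exact_mod_cast congrArg Complex.ofReal this
  -- P applied to the all-ones vector is zero (over ℂ)
  have hPone : Pc *ᵥ (fun _ => (1 : ℂ)) = 0 := by
    funext i
    have := congrFun hP1 i
    simp only [Matrix.mulVec, dotProduct, mul_one, Pi.zero_apply] at this ⊢
    simp only [hPc, Matrix.map_apply]
    rw [← Complex.ofReal_sum]
    exact_mod_cast congrArg Complex.ofReal this
  -- P Pᵀ = 1 over ℂ
  have hPPc : Pc * Ptc = 1 := by
    ext i j
    have h := congrFun (congrFun hPP i) j
    simp only [hPc, hPtc, Matrix.mul_apply, Matrix.map_apply, Matrix.one_apply] at h ⊢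
    by_cases hij : i = j <;> simp only [hij, if_true, if_false] at h ⊢ <;> exact_mod_cast h
  have key : ∀ x : Fin n → ℂ, x ≠ 0 → Ac *ᵥ x = lam • x →
      Pc *ᵥ x ≠ 0 ∧ (Pc * Ac * Ptc) *ᵥ (Pc *ᵥ x) = lam • (Pc *ᵥ x) := by
    intro x hx0 hx
    have hPx : Pc *ᵥ x ≠ 0 := by
      intro h0
      obtain ⟨c, hc⟩ := kerP_complex hn P hP1 hPP x h0
      have hcx : x = c • (fun _ => (1 : ℂ)) := by funext i; simp [hc]
      have hc0 : c ≠ 0 := by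
        intro h; apply hx0; rw [hcx, h, zero_smul]
      have : Ac *ᵥ x = x := by
        rw [hcx, Matrix.mulVec_smul, hAone]
      rw [this] at hx
      have h0 : c = lam * c := by
        have := congrFun hx ⟨0, by omega⟩
        simpa [hcx] using this
      have hz : (lam - 1) * c = 0 := by rw [sub_mul, one_mul, ← h0]; ring
      rcases mul_eq_zero.mp hz with h | h
      · exact hlam (sub_eq_zero.mp h)
      · exact hc0 h
    refine ⟨hPx, ?_⟩
    -- w := Pᵀ P x - x is in the kernel of P
    set w : Fin n → ℂ := Ptc *ᵥ (Pc *ᵥ x) - x with hw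
    have hPw : Pc *ᵥ w = 0 := by
      rw [hw, Matrix.mulVec_sub, Matrix.mulVec_mulVec, hPPc, Matrix.one_mulVec, sub_self]
    obtain ⟨c, hc⟩ := kerP_complex hn P hP1 hPP w hPw
    have hPtPx : Ptc *ᵥ (Pc *ᵥ x) = x + w := by rw [hw]; abel
    calc (Pc * Ac * Ptc) *ᵥ (Pc *ᵥ x)
        = Pc *ᵥ (Ac *ᵥ (Ptc *ᵥ (Pc *ᵥ x))) := by
          rw [← Matrix.mulVec_mulVec, ← Matrix.mulVec_mulVec]
      _ = Pc *ᵥ (Ac *ᵥ (x + w)) := by rw [hPtPx]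
      _ = Pc *ᵥ (lam • x + Ac *ᵥ w) := by rw [Matrix.mulVec_add, hx]
      _ = lam • (Pc *ᵥ x) + Pc *ᵥ (Ac *ᵥ w) := by
          rw [Matrix.mulVec_add, Matrix.mulVec_smul]
      _ = lam • (Pc *ᵥ x) := by
          have hwc : w = c • (fun _ => (1 : ℂ)) := by funext i; simp [hc]
          rw [hwc, Matrix.mulVec_smul, hAone, Matrix.mulVec_smul, hPone, smul_zero, add_zero]
  obtain ⟨x, hx0, hx⟩ := heig
  exact ⟨⟨Pc *ᵥ x, (key x hx0 hx).1, (key x hx0 hx).2⟩, key⟩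
end

section
/- Let A be an n×n row-stochastic real matrix all of whose entries are strictly positive. Then the all-ones vector 𝟏 is an eigenvector of A with eigenvalue 1, and every complex eigenvalue λ of A with λ ≠ 1 satisfies |λ| < 1; in particular 1 is the unique eigenvalue of A of absolute value one. -/
open Matrix

/-!
By Gershgorin's theorem every eigenvalue `λ` of a row-stochastic matrix lies in a disc
`|λ - a| ≤ 1 - a` with `a = A k k` a diagonal entry. When `a > 0`, such a disc lies in the
closed unit disc and touches the unit circle only at `1`.
-/

namespace Complex

open ComplexOrder

theorem norm_lt_one_of_norm_sub_ofReal_le {z : ℂ} {a : ℝ} (ha : 0 < a)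
    (h : ‖z - a‖ ≤ 1 - a) (hz : z ≠ 1) : ‖z‖ < 1 := by
  have hle : ‖z‖ ≤ 1 := by
    calc ‖z‖ ≤ ‖(a : ℂ)‖ + ‖z - a‖ := norm_le_insert' z a
      _ ≤ a + (1 - a) := by rw [norm_real, Real.norm_of_nonneg ha.le]; gcongr
      _ = 1 := by ring
  refine hle.lt_of_ne fun hnorm => hz ?_
  have hsq : ‖z‖ ^ 2 - 2 * a * z.re + a ^ 2 ≤ (1 - a) ^ 2 := by
    have hexp : ‖z - a‖ ^ 2 = ‖z‖ ^ 2 - 2 * a * z.re + a ^ 2 := by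
      rw [Complex.sq_norm, Complex.sq_norm, normSq_sub, normSq_ofReal, conj_ofReal, re_mul_ofReal]
      ring
    rw [← hexp]
    exact pow_le_pow_left₀ (norm_nonneg _) h 2
  -- with `‖z‖ = 1` this reads `2 * a * (1 - z.re) ≤ 0`
  have hre : z.re = ‖z‖ := le_antisymm (re_le_norm z) (by nlinarith)
  rw [eq_coe_norm_of_nonneg (re_eq_norm.mp hre), hnorm, ofReal_one]

end Complex

theorem Matrix.hasEigenvalue_toLin'_of_mulVec_eq_smul {ι K : Type*} [Fintype ι] [DecidableEq ι]
    [Field K] {M : Matrix ι ι K} {μ : K} {x : ι → K} (hx : x ≠ 0) (h : M *ᵥ x = μ • x) :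
    Module.End.HasEigenvalue (toLin' M) μ :=
  Module.End.hasEigenvalue_of_hasEigenvector ⟨Module.End.mem_eigenspace_iff.mpr h, hx⟩

namespace RowStochastic

variable {n : ℕ} {A : Matrix (Fin n) (Fin n) ℝ}

theorem mulVec_one (hA : RowStochastic A) : A *ᵥ (fun _ => (1 : ℝ)) = fun _ => 1 := by
  funext i
  simpa [mulVec, dotProduct] using hA.2 i

theorem sum_erase_diag (hA : RowStochastic A) (k : Fin n) :
    ∑ j ∈ Finset.univ.erase k, A k j = 1 - A k k := by
  rw [Finset.sum_erase_eq_sub (Finset.mem_univ k), hA.2 k]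

theorem exists_norm_sub_diag_le (hA : RowStochastic A) {μ : ℂ}
    (hμ : Module.End.HasEigenvalue (toLin' (A.map Complex.ofReal)) μ) :
    ∃ k, ‖μ - A k k‖ ≤ 1 - A k k := by
  obtain ⟨k, hk⟩ := eigenvalue_mem_ball hμ
  refine ⟨k, ?_⟩
  rw [mem_closedBall_iff_norm] at hk
  simp only [map_apply, Complex.norm_real, Real.norm_of_nonneg (hA.1 _ _)] at hk
  rwa [hA.sum_erase_diag k] at hk

end RowStochastic

/-- For a row-stochastic matrix with strictly positive entries, the all-ones
vector is an eigenvector for the eigenvalue `1`, every complex eigenvalue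
`λ ≠ 1` satisfies `|λ| < 1`, and `1` is the unique eigenvalue of absolute
value one. -/
theorem statement14 {n : ℕ} (hn : 0 < n) (A : Matrix (Fin n) (Fin n) ℝ)
    (hA : RowStochastic A) (hpos : ∀ i j, 0 < A i j) :
    ((fun _ => (1 : ℝ)) : Fin n → ℝ) ≠ 0 ∧
    (A *ᵥ (fun _ => (1 : ℝ)) = fun _ => (1 : ℝ)) ∧
    (∀ lam : ℂ, lam ≠ 1 →
      (∃ x : Fin n → ℂ, x ≠ 0 ∧ (A.map Complex.ofReal) *ᵥ x = lam • x) →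
      ‖lam‖ < 1) ∧
    (∀ lam : ℂ,
      (∃ x : Fin n → ℂ, x ≠ 0 ∧ (A.map Complex.ofReal) *ᵥ x = lam • x) →
      ‖lam‖ = 1 → lam = 1) := by
  have hdisc : ∀ lam : ℂ, lam ≠ 1 →
      (∃ x : Fin n → ℂ, x ≠ 0 ∧ (A.map Complex.ofReal) *ᵥ x = lam • x) → ‖lam‖ < 1 := by
    rintro lam hlam ⟨x, hx, heig⟩
    obtain ⟨k, hk⟩ := hA.exists_norm_sub_diag_le (hasEigenvalue_toLin'_of_mulVec_eq_smul hx heig)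
    exact Complex.norm_lt_one_of_norm_sub_ofReal_le (hpos k k) hk hlam
  refine ⟨fun h => one_ne_zero (congrFun h ⟨0, hn⟩), hA.mulVec_one, hdisc, ?_⟩
  intro lam heig hnorm
  by_contra hlam
  exact (hdisc lam hlam heig).ne hnorm
end

section
/- Let (B_i)_{i∈ℕ} be a sequence of n×n row-stochastic real matrices and (δ_i)_{i∈ℕ} a sequence of positive reals with ∑_{i=0}^∞ δ_i = ∞, such that every entry of B_i is at least δ_i for all i. Then the backward products B_i ··· B_1 B_0 converge as i → ∞ to a row-stochastic matrix all of whose rows are equal (a consensus matrix). -/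
open Matrix Filter Topology

lemma rs_mul {n : ℕ} {A C : Matrix (Fin n) (Fin n) ℝ}
    (hA : RowStochastic A) (hC : RowStochastic C) : RowStochastic (A * C) := by
  constructor
  · intro i j
    rw [Matrix.mul_apply]
    exact Finset.sum_nonneg fun b _ => mul_nonneg (hA.1 i b) (hC.1 b j)
  · intro i
    simp only [Matrix.mul_apply]
    rw [Finset.sum_comm]
    calc ∑ b, ∑ j, A i b * C b j = ∑ b, A i b * ∑ j, C b j := by
          simp [Finset.mul_sum]
      _ = 1 := by simp [hC.2, hA.2 i]

/-- Core oscillation inequality for one step. -/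
lemma core_ineq {n : ℕ} (hne : (Finset.univ : Finset (Fin n)).Nonempty)
    {A : Matrix (Fin n) (Fin n) ℝ} (hA : RowStochastic A)
    {d : ℝ} (hminA : ∀ a b, d ≤ A a b) (x : Fin n → ℝ) (a a' : Fin n) :
    (∑ b, A a b * x b) - (∑ b, A a' b * x b) ≤
      (1 - n * d) * (Finset.univ.sup' hne x - Finset.univ.inf' hne x) := by
  set M := Finset.univ.sup' hne x with hM
  set m := Finset.univ.inf' hne x with hm
  have hmle : ∀ b, m ≤ x b := fun b => Finset.inf'_le _ (Finset.mem_univ b)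
  have hMge : ∀ b, x b ≤ M := fun b => Finset.le_sup' _ (Finset.mem_univ b)
  calc (∑ b, A a b * x b) - (∑ b, A a' b * x b)
      = ∑ b, (A a b - A a' b) * x b := by
        rw [← Finset.sum_sub_distrib]; exact Finset.sum_congr rfl fun b _ => by ring
    _ = ∑ b, (A a b - A a' b) * (x b - m) := by
        have h0 : ∑ b, (A a b - A a' b) = 0 := by
          rw [Finset.sum_sub_distrib, hA.2 a, hA.2 a']; ring
        rw [eq_comm]
        calc ∑ b, (A a b - A a' b) * (x b - m)
            = ∑ b, ((A a b - A a' b) * x b - (A a b - A a' b) * m) :=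
              Finset.sum_congr rfl fun b _ => by ring
          _ = ∑ b, (A a b - A a' b) * x b - (∑ b, (A a b - A a' b)) * m := by
              rw [Finset.sum_sub_distrib, Finset.sum_mul]
          _ = ∑ b, (A a b - A a' b) * x b := by rw [h0]; ring
    _ ≤ ∑ b, (A a b - d) * (M - m) := by
        refine Finset.sum_le_sum fun b _ => ?_
        have h1 : A a b - A a' b ≤ A a b - d := by linarith [hminA a' b]
        have h2 : (0:ℝ) ≤ x b - m := by linarith [hmle b]
        have h3 : x b - m ≤ M - m := by linarith [hMge b]
        have h4 : (0:ℝ) ≤ A a b - d := by linarith [hminA a b]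
        calc (A a b - A a' b) * (x b - m) ≤ (A a b - d) * (x b - m) :=
              mul_le_mul_of_nonneg_right h1 h2
          _ ≤ (A a b - d) * (M - m) := mul_le_mul_of_nonneg_left h3 h4
    _ = (1 - n * d) * (M - m) := by
        rw [← Finset.sum_mul]
        congr 1
        rw [Finset.sum_sub_distrib, hA.2 a, Finset.sum_const, Finset.card_univ,
          Fintype.card_fin, nsmul_eq_mul]

/-- If `B i` are row-stochastic with all entries at least `δ i > 0` and
`∑ δ i = ∞`, then the backward products `B i * ⋯ * B 1 * B 0` converge to a
consensus matrix (a row-stochastic matrix with all rows equal). -/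
theorem statement15 {n : ℕ} (B : ℕ → Matrix (Fin n) (Fin n) ℝ) (δ : ℕ → ℝ)
    (hstoch : ∀ i, RowStochastic (B i))
    (hδpos : ∀ i, 0 < δ i)
    (hmin : ∀ i a b, δ i ≤ B i a b)
    (hdiv : Tendsto (fun N => ∑ i ∈ Finset.range N, δ i) atTop atTop) :
    ∃ K : Matrix (Fin n) (Fin n) ℝ, RowStochastic K ∧ (∀ a b : Fin n, K a = K b) ∧
      Tendsto (fun i => ((List.range (i + 1)).reverse.map B).prod) atTop (nhds K) := by
  set P : ℕ → Matrix (Fin n) (Fin n) ℝ :=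
    fun i => ((List.range (i + 1)).reverse.map B).prod with hPdef
  have hP0 : P 0 = B 0 := by simp [hPdef, List.range_succ]
  have hPs : ∀ i, P (i + 1) = B (i + 1) * P i := by
    intro i
    simp [hPdef, List.range_succ]
  have hPstoch : ∀ i, RowStochastic (P i) := by
    intro i
    induction i with
    | zero => rw [hP0]; exact hstoch 0
    | succ i ih => rw [hPs]; exact rs_mul (hstoch _) ih
  rcases Nat.eq_zero_or_pos n with hn | hn
  · subst hn
    refine ⟨0, ⟨fun i => i.elim0, fun i => i.elim0⟩, fun a => a.elim0, ?_⟩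
    have h0 : ∀ i, P i = 0 := fun i => by ext a b; exact a.elim0
    rw [show P = fun _ => (0 : Matrix (Fin 0) (Fin 0) ℝ) from funext h0]
    exact tendsto_const_nhds
  · haveI : Nonempty (Fin n) := ⟨⟨0, hn⟩⟩
    have hne : (Finset.univ : Finset (Fin n)).Nonempty := Finset.univ_nonempty
    set Ms : Fin n → ℕ → ℝ := fun j i => Finset.univ.sup' hne (fun a => P i a j) with hMs
    set ms : Fin n → ℕ → ℝ := fun j i => Finset.univ.inf' hne (fun a => P i a j) with hms
    have hentry_rec : ∀ i a j, P (i + 1) a j = ∑ b, B (i + 1) a b * P i b j := by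
      intro i a j
      rw [hPs, Matrix.mul_apply]
    -- basic bounds
    have hmle : ∀ j i a, ms j i ≤ P i a j := by
      intro j i a
      simp only [hms]
      exact Finset.inf'_le (fun a => P i a j) (Finset.mem_univ a)
    have hMge : ∀ j i a, P i a j ≤ Ms j i := by
      intro j i a
      simp only [hMs]
      exact Finset.le_sup' (fun a => P i a j) (Finset.mem_univ a)
    have hmM : ∀ j i, ms j i ≤ Ms j i := fun j i =>
      le_trans (hmle j i (Classical.arbitrary _)) (hMge j i _)
    -- monotonicity of sup/inf
    have hMle : ∀ j i, Ms j (i + 1) ≤ Ms j i := by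
      intro j i
      conv_lhs => rw [hMs]
      refine Finset.sup'_le _ _ fun a _ => ?_
      rw [hentry_rec]
      calc ∑ b, B (i+1) a b * P i b j ≤ ∑ b, B (i+1) a b * Ms j i :=
            Finset.sum_le_sum fun b _ =>
              mul_le_mul_of_nonneg_left (hMge j i b) ((hstoch _).1 a b)
        _ = Ms j i := by rw [← Finset.sum_mul, (hstoch _).2 a, one_mul]
    have hmge : ∀ j i, ms j i ≤ ms j (i + 1) := by
      intro j i
      conv_rhs => rw [hms]
      refine Finset.le_inf' _ _ fun a _ => ?_
      rw [hentry_rec]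
      calc ms j i = ∑ b, B (i+1) a b * ms j i := by
            rw [← Finset.sum_mul, (hstoch _).2 a, one_mul]
        _ ≤ ∑ b, B (i+1) a b * P i b j :=
            Finset.sum_le_sum fun b _ =>
              mul_le_mul_of_nonneg_left (hmle j i b) ((hstoch _).1 a b)
    -- contraction step
    have hcontr : ∀ j i, Ms j (i + 1) - ms j (i + 1) ≤
        (1 - n * δ (i + 1)) * (Ms j i - ms j i) := by
      intro j i
      have hcore2 : ∀ a a', P (i+1) a j - P (i+1) a' j ≤
          (1 - n * δ (i+1)) * (Ms j i - ms j i) := by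
        intro a a'
        rw [hentry_rec, hentry_rec]
        exact core_ineq hne (hstoch (i+1)) (hmin (i+1)) (fun b => P i b j) a a'
      rw [sub_le_iff_le_add]
      conv_lhs => rw [hMs]
      refine Finset.sup'_le _ _ fun a _ => ?_
      rw [← sub_le_iff_le_add']
      conv_rhs => rw [hms]
      refine Finset.le_inf' _ _ fun a' _ => ?_
      have := hcore2 a a'
      linarith
    -- nonnegativity of contraction factors
    have hfac : ∀ i, 0 ≤ 1 - (n:ℝ) * δ i := by
      intro i
      have a0 : Fin n := Classical.arbitrary _
      have h1 : (n:ℝ) * δ i ≤ ∑ b, B i a0 b := by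
        calc (n:ℝ) * δ i = ∑ _b : Fin n, δ i := by
              rw [Finset.sum_const, Finset.card_univ, Fintype.card_fin, nsmul_eq_mul]
          _ ≤ ∑ b, B i a0 b := Finset.sum_le_sum fun b _ => hmin i a0 b
      rw [(hstoch i).2 a0] at h1
      linarith
    -- oscillation bound by product
    have hosc : ∀ j i, Ms j i - ms j i ≤
        ∏ k ∈ Finset.range i, (1 - (n:ℝ) * δ (k + 1)) := by
      intro j i
      induction i with
      | zero =>
        simp only [Finset.range_zero, Finset.prod_empty]
        have hM1 : Ms j 0 ≤ 1 := by
          rw [hMs]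
          refine Finset.sup'_le _ _ fun a _ => ?_
          rw [hP0]
          calc B 0 a j ≤ ∑ j', B 0 a j' :=
                Finset.single_le_sum (fun j' _ => (hstoch 0).1 a j') (Finset.mem_univ j)
            _ = 1 := (hstoch 0).2 a
        have hm0 : 0 ≤ ms j 0 := by
          rw [hms]
          refine Finset.le_inf' _ _ fun a _ => ?_
          rw [hP0]; exact (hstoch 0).1 a j
        linarith
      | succ i ih =>
        calc Ms j (i+1) - ms j (i+1) ≤ (1 - n * δ (i+1)) * (Ms j i - ms j i) :=
              hcontr j i
          _ ≤ (1 - n * δ (i+1)) * ∏ k ∈ Finset.range i, (1 - (n:ℝ) * δ (k + 1)) :=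
              mul_le_mul_of_nonneg_left ih (hfac (i+1))
          _ = ∏ k ∈ Finset.range (i+1), (1 - (n:ℝ) * δ (k + 1)) := by
              rw [Finset.prod_range_succ, mul_comm]
    -- the product tends to 0
    have hprod0 : Tendsto (fun i => ∏ k ∈ Finset.range i, (1 - (n:ℝ) * δ (k + 1)))
        atTop (𝓝 0) := by
      have hS : Tendsto (fun i => ∑ k ∈ Finset.range i, δ (k + 1)) atTop atTop := by
        have heq : ∀ i, ∑ k ∈ Finset.range i, δ (k + 1)
            = (∑ k ∈ Finset.range (i + 1), δ k) + (- δ 0) := by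
          intro i
          rw [Finset.sum_range_succ']; ring
        rw [funext heq]
        exact tendsto_atTop_add_const_right _ _ (hdiv.comp (tendsto_add_atTop_nat 1))
      have hnpos : (0:ℝ) < n := by exact_mod_cast hn
      have hexp : Tendsto (fun i => Real.exp (-((n:ℝ) *
          ∑ k ∈ Finset.range i, δ (k + 1)))) atTop (𝓝 0) :=
        Real.tendsto_exp_atBot.comp
          (tendsto_neg_atTop_atBot.comp (hS.const_mul_atTop hnpos))
      refine squeeze_zero (fun i => Finset.prod_nonneg fun k _ => hfac (k+1))
        (fun i => ?_) hexp
      calc ∏ k ∈ Finset.range i, (1 - (n:ℝ) * δ (k + 1))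
          ≤ ∏ k ∈ Finset.range i, Real.exp (-( (n:ℝ) * δ (k + 1))) := by
            refine Finset.prod_le_prod (fun k _ => hfac (k+1)) fun k _ => ?_
            have := Real.add_one_le_exp (-((n:ℝ) * δ (k + 1)))
            linarith
        _ = Real.exp (-((n:ℝ) * ∑ k ∈ Finset.range i, δ (k + 1))) := by
            rw [← Real.exp_sum]
            congr 1
            rw [Finset.mul_sum]
            simp
    have hD0 : ∀ j, Tendsto (fun i => Ms j i - ms j i) atTop (𝓝 0) := by
      intro j
      exact squeeze_zero (fun i => by linarith [hmM j i]) (hosc j) hprod0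
    -- limits of sup sequences
    have hMant : ∀ j, Antitone (Ms j) := fun j =>
      antitone_nat_of_succ_le (hMle j)
    have hmmono : ∀ j, Monotone (ms j) := fun j =>
      monotone_nat_of_le_succ (hmge j)
    have hbdd : ∀ j, BddBelow (Set.range (Ms j)) := by
      intro j
      refine ⟨ms j 0, ?_⟩
      rintro _ ⟨i, rfl⟩
      exact le_trans (hmmono j (Nat.zero_le i)) (hmM j i)
    set L : Fin n → ℝ := fun j => ⨅ i, Ms j i with hL
    have hML : ∀ j, Tendsto (Ms j) atTop (𝓝 (L j)) := fun j =>
      tendsto_atTop_ciInf (hMant j) (hbdd j)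
    have hmL : ∀ j, Tendsto (ms j) atTop (𝓝 (L j)) := by
      intro j
      have := (hML j).sub (hD0 j)
      rw [sub_zero] at this
      refine this.congr fun i => by ring
    have hentry : ∀ a j, Tendsto (fun i => P i a j) atTop (𝓝 (L j)) := by
      intro a j
      exact tendsto_of_tendsto_of_tendsto_of_le_of_le (hmL j) (hML j)
        (fun i => hmle j i a) (fun i => hMge j i a)
    refine ⟨Matrix.of fun _ j => L j, ⟨?_, ?_⟩, fun a b => rfl, ?_⟩
    · intro a j
      exact ge_of_tendsto' (hentry a j) fun i => (hPstoch i).1 a j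
    · intro a
      have h1 : Tendsto (fun i => ∑ j, P i a j) atTop (𝓝 (∑ j, L j)) :=
        tendsto_finset_sum _ fun j _ => hentry a j
      have h2 : (fun i => ∑ j, P i a j) = fun _ => (1:ℝ) :=
        funext fun i => (hPstoch i).2 a
      rw [h2] at h1
      exact (tendsto_nhds_unique tendsto_const_nhds h1).symm
    · refine tendsto_pi_nhds.2 fun a => tendsto_pi_nhds.2 fun j => ?_
      exact hentry a j
end
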